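/- arXiv:2204.10998 — 5 statements merged into one kernel-verified Lean document; each statement's English description precedes it below -/
import Mathlib

section
/- Let n ≥ 2 be an integer, let P be a finite nonempty set, let ε : P → {−1, +1} be a sign function, and for each p ∈ P let w_{p,1}, …, w_{p,n} be positive integers. Assume that the power series ∑_{p ∈ P} ε(p) · ∏_{i=1}^{n} g_{w_{p,i}} in ℚ⟦X⟧ is constant (i.e., equal to C·1 for some rational number C), and assume there is at least one p with ε(p) = +1 and at least one p with ε(p) = −1. Let W₊ be the multiset of all weights w_{p,i} over the points p with ε(p) = +1, and W₋ the multiset of all weights w_{p,i} over the points p with ε(p) = −1. Write the elements of W₊ in nondecreasing order as a₁ ≤ a₂ ≤ ⋯ and those of W₋ as b₁ ≤ b₂ ≤ ⋯. Then a₁ = b₁, a₂ = b₂, and the value a₂ occurs with the same multiplicity in W₊ as in W₋. -/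
/-- `g w = 1 + 2 ∑_{j ≥ 1} X^{jw}` in `ℚ⟦X⟧`: the coefficient of `X^0` is `1`,
and for `n ≥ 1` the coefficient of `X^n` is `2` if `w ∣ n` and `0` otherwise. -/
noncomputable def g (w : ℕ) : PowerSeries ℚ :=
  PowerSeries.mk fun n => if n = 0 then 1 else if w ∣ n then 2 else 0

/-!
For `m > 0` smaller than the sum of any two weights at one point, every product of two factors
`g w - 1 ∈ X ^ w ℚ⟦X⟧` vanishes modulo `X ^ (m + 1)`, so the coefficient of `X ^ m` in
`∏ᵢ g (w p i)` is `2 · #{i | w p i ∣ m}`. Constancy of the signed sum then says that `W₊` and `W₋`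
have equally many elements dividing `m`. Once this holds for all `m ≤ min a₂ b₂` (which lies
below all those pair sums), induction over the divisors shows that `W₊` and `W₋` have the same
multiplicities up to `min a₂ b₂`. These determine `a₁ = b₁` and `a₂ = b₂`, because the
`k`-th smallest element of a multiset is the unique `x` with `#{< x} ≤ k < #{≤ x}`.
-/

open Finset PowerSeries

namespace Multiset

variable {α : Type*}

theorem countP_mono_left {s : Multiset α} {p q : α → Prop} [DecidablePred p] [DecidablePred q]
    (h : ∀ x, p x → q x) : s.countP p ≤ s.countP q := by
  simp only [countP_eq_card_filter]
  exact card_le_card (monotone_filter_right s h)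

theorem countP_eq_of_count_eq [DecidableEq α] {s t : Multiset α} {q : α → Prop}
    [DecidablePred q] (h : ∀ x, q x → s.count x = t.count x) : s.countP q = t.countP q := by
  simp only [countP_eq_card_filter]
  congr 1
  ext x
  simp only [count_filter]
  split_ifs with hx
  exacts [h x hx, rfl]

end Multiset

theorem List.Pairwise.countP_lt_getD_le_and_lt_countP_le_getD {α : Type*} [LinearOrder α]
    {l : List α} (hl : l.Pairwise (· ≤ ·)) {k : ℕ} (hk : k < l.length) (d : α) :
    l.countP (· < l.getD k d) ≤ k ∧ k < l.countP (· ≤ l.getD k d) := by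
  induction l generalizing k with
  | nil => simp at hk
  | cons a l ih =>
    rw [List.pairwise_cons] at hl
    cases k with
    | zero =>
      simp only [List.getD_cons_zero, List.countP_cons]
      refine ⟨?_, by simp⟩
      simp only [decide_eq_true_eq, lt_irrefl, if_false, add_zero, Nat.le_zero,
        List.countP_eq_zero]
      exact fun x hx => not_lt.2 (hl.1 x hx)
    | succ k =>
      have hk' : k < l.length := by simpa using hk
      have hmem : l.getD k d ∈ l := by
        rw [List.getD_eq_getElem _ _ hk']
        exact List.getElem_mem hk'
      obtain ⟨hlt, hle⟩ := ih hl.2 hk'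
      simp only [List.getD_cons_succ, List.countP_cons, decide_eq_true_eq, hl.1 _ hmem, if_true]
      constructor
      · split_ifs <;> omega
      · omega

namespace Multiset

section SortedEntries

variable {α : Type*} [LinearOrder α] {s t : Multiset α} {k : ℕ} (d : α)

theorem countP_lt_sort_getD_le (hk : k < card s) :
    s.countP (· < (s.sort (· ≤ ·)).getD k d) ≤ k := by
  have := ((pairwise_sort s _).countP_lt_getD_le_and_lt_countP_le_getD (by simpa) d).1
  rwa [← coe_countP, sort_eq] at this

theorem lt_countP_le_sort_getD (hk : k < card s) :
    k < s.countP (· ≤ (s.sort (· ≤ ·)).getD k d) := by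
  have := ((pairwise_sort s _).countP_lt_getD_le_and_lt_countP_le_getD (by simpa) d).2
  rwa [← coe_countP, sort_eq] at this

theorem sort_getD_eq_of_countP {x : α} (hlt : s.countP (· < x) ≤ k)
    (hle : k < s.countP (· ≤ x)) : (s.sort (· ≤ ·)).getD k d = x := by
  have hk : k < card s := hle.trans_le (countP_le_card _ _)
  refine le_antisymm (not_lt.1 fun hx => ?_) (not_lt.1 fun hx => ?_)
  · have := countP_mono_left (s := s) fun y (hy : y ≤ x) => hy.trans_lt hx
    have := countP_lt_sort_getD_le d hk
    omega
  · have := countP_mono_left (s := s)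
      fun y (hy : y ≤ (s.sort (· ≤ ·)).getD k d) => hy.trans_lt hx
    have := lt_countP_le_sort_getD d hk
    omega

theorem sort_getD_mono {j : ℕ} (hjk : j ≤ k) (hk : k < card s) :
    (s.sort (· ≤ ·)).getD j d ≤ (s.sort (· ≤ ·)).getD k d := by
  refine not_lt.1 fun hlt => ?_
  have := countP_mono_left (s := s)
    fun y (hy : y ≤ (s.sort (· ≤ ·)).getD k d) => hy.trans_lt hlt
  have := countP_lt_sort_getD_le d (hjk.trans_lt hk)
  have := lt_countP_le_sort_getD d hk
  omega

theorem sort_getD_eq_of_count_eq {u : α} (h : ∀ x ≤ u, s.count x = t.count x)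
    (hk : k < card s) (hu : (s.sort (· ≤ ·)).getD k d ≤ u) :
    (s.sort (· ≤ ·)).getD k d = (t.sort (· ≤ ·)).getD k d := by
  symm
  apply sort_getD_eq_of_countP
  · rw [← countP_eq_of_count_eq fun x hx => h x (hx.trans_le hu).le]
    exact countP_lt_sort_getD_le d hk
  · rw [← countP_eq_of_count_eq fun x hx => h x (hx.trans hu)]
    exact lt_countP_le_sort_getD d hk

theorem sort_getD_eq_of_count_eq_of_le_min (hs : k < card s) (ht : k < card t)
    (h : ∀ x ≤ min ((s.sort (· ≤ ·)).getD k d) ((t.sort (· ≤ ·)).getD k d),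
      s.count x = t.count x) :
    ∀ j ≤ k, (s.sort (· ≤ ·)).getD j d = (t.sort (· ≤ ·)).getD j d := by
  have hk : (s.sort (· ≤ ·)).getD k d = (t.sort (· ≤ ·)).getD k d := by
    rcases le_total ((s.sort (· ≤ ·)).getD k d) ((t.sort (· ≤ ·)).getD k d) with hst | hts
    · exact sort_getD_eq_of_count_eq d h hs (le_min le_rfl hst)
    · exact (sort_getD_eq_of_count_eq d (fun x hx => (h x (by rwa [min_comm])).symm) ht
        (le_min le_rfl hts)).symm
  rw [← hk, min_self] at h
  exact fun j hjk =>
    sort_getD_eq_of_count_eq d h (hjk.trans_lt hs) (sort_getD_mono d hjk hs)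

end SortedEntries

theorem count_eq_of_countP_dvd_eq {s t : Multiset ℕ} (hs : 0 ∉ s) (ht : 0 ∉ t) {u : ℕ}
    (h : ∀ m, 0 < m → m ≤ u → s.countP (· ∣ m) = t.countP (· ∣ m)) :
    ∀ x ≤ u, s.count x = t.count x := by
  intro x
  induction x using Nat.strong_induction_on with
  | _ x ih =>
  intro hxu
  rcases x.eq_zero_or_pos with rfl | hx
  · rw [count_eq_zero.2 hs, count_eq_zero.2 ht]
  have hsplit : ∀ r : Multiset ℕ,
      r.countP (· ∣ x) = r.countP (fun y => y ∣ x ∧ y < x) + r.count x := by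
    intro r
    rw [countP_eq_countP_filter_add r _ (· < x), countP_filter, countP_filter, count]
    congr 1
    refine countP_congr rfl fun y _ => propext ⟨?_, ?_⟩
    · rintro ⟨hy, hyx⟩
      exact (le_antisymm (Nat.le_of_dvd hx hy) (not_lt.1 hyx)).symm
    · rintro rfl
      exact ⟨dvd_rfl, lt_irrefl x⟩
  have hproper : s.countP (fun y => y ∣ x ∧ y < x) = t.countP (fun y => y ∣ x ∧ y < x) :=
    countP_eq_of_count_eq fun y hy => ih y hy.2 (hy.2.le.trans hxu)
  have := h x hx hxu
  rw [hsplit, hsplit, hproper] at this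
  omega

end Multiset

section Pairs

variable {ι : Type*} [Fintype ι] {v : ι → ℕ} {i j : ι}

theorem lt_add_of_card_filter_lt_le_one (hv : ∀ i, 0 < v i) {u : ℕ}
    (h : #{i | v i < u} ≤ 1) (hij : i ≠ j) : u < v i + v j := by
  by_contra hle
  have : 1 < #{i | v i < u} :=
    one_lt_card.2 ⟨i, by simp only [mem_filter, mem_univ, true_and]; have := hv j; omega,
      j, by simp only [mem_filter, mem_univ, true_and]; have := hv i; omega, hij⟩
  omega

theorem sort_getD_one_lt_add {W : Multiset ℕ} (hW : univ.val.map v ≤ W) (hv : ∀ i, 0 < v i)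
    (hij : i ≠ j) : (W.sort (· ≤ ·)).getD 1 0 < v i + v j := by
  have hcard : 1 < Multiset.card W :=
    (Fintype.one_lt_card_iff.2 ⟨i, j, hij⟩).trans_le (by simpa using Multiset.card_le_card hW)
  refine lt_add_of_card_filter_lt_le_one hv ?_ hij
  calc #{i | v i < (W.sort (· ≤ ·)).getD 1 0}
      = (univ.val.map v).countP (· < (W.sort (· ≤ ·)).getD 1 0) := by
        rw [Multiset.countP_map]; rfl
    _ ≤ W.countP (· < (W.sort (· ≤ ·)).getD 1 0) := Multiset.countP_le_of_le _ hW
    _ ≤ 1 := Multiset.countP_lt_sort_getD_le 0 hcard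

end Pairs

section WeightMultisets

variable {P ι : Type*} [Fintype ι] (w : P → ι → ℕ) (s : Finset P)

theorem countP_sum_map_univ (r : ℕ → Prop) [DecidablePred r] :
    (∑ p ∈ s, univ.val.map (w p)).countP r = ∑ p ∈ s, #{i | r (w p i)} := by
  have := map_sum (Multiset.countPAddMonoidHom r) (fun p => univ.val.map (w p)) s
  simp only [Multiset.coe_countPAddMonoidHom, Multiset.countP_map] at this
  exact this

theorem zero_notMem_sum_map_univ (hw : ∀ p i, 0 < w p i) :
    0 ∉ ∑ p ∈ s, univ.val.map (w p) := by
  simp only [Multiset.mem_sum, Multiset.mem_map, not_exists, not_and]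
  exact fun p _ i _ hi => (hw p i).ne' hi

theorem map_univ_le_sum_map_univ {p : P} (hp : p ∈ s) :
    univ.val.map (w p) ≤ ∑ p ∈ s, univ.val.map (w p) :=
  single_le_sum (f := fun q => univ.val.map (w q)) (fun _ _ => Multiset.zero_le _) hp

theorem card_le_card_sum_map_univ {p : P} (hp : p ∈ s) :
    Fintype.card ι ≤ Multiset.card (∑ p ∈ s, univ.val.map (w p)) := by
  simpa using Multiset.card_le_card (map_univ_le_sum_map_univ w s hp)

end WeightMultisets

theorem dvd_prod_sub_one_add_sum {R ι : Type*} [CommRing R] {d : R} (f : ι → R) (s : Finset ι)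
    (h : ∀ i ∈ s, ∀ j ∈ s, i ≠ j → d ∣ (f i - 1) * (f j - 1)) :
    d ∣ ∏ i ∈ s, f i - (1 + ∑ i ∈ s, (f i - 1)) := by
  classical
  induction s using Finset.induction_on with
  | empty => simp
  | insert a s ha ih =>
    have hcross : d ∣ (f a - 1) * ∑ i ∈ s, (f i - 1) := by
      rw [mul_sum]
      exact dvd_sum fun i hi => h a (mem_insert_self a s) i (mem_insert_of_mem hi) (by grind)
    have hrest := ih fun i hi j hj => h i (mem_insert_of_mem hi) j (mem_insert_of_mem hj)
    have hsplit : ∏ i ∈ insert a s, f i - (1 + ∑ i ∈ insert a s, (f i - 1)) =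
        (f a - 1) * ∑ i ∈ s, (f i - 1) + f a * (∏ i ∈ s, f i - (1 + ∑ i ∈ s, (f i - 1))) := by
      rw [prod_insert ha, sum_insert ha]
      ring
    rw [hsplit]
    exact dvd_add hcross (dvd_mul_of_dvd_right hrest _)

theorem coeff_g (w k : ℕ) : coeff k (g w) = if k = 0 then 1 else if w ∣ k then 2 else 0 := by
  simp [g]

theorem X_pow_dvd_g_sub_one (w : ℕ) : X ^ w ∣ g w - 1 := by
  refine X_pow_dvd_iff.2 fun k hk => ?_
  rw [map_sub, coeff_g, coeff_one]
  rcases k.eq_zero_or_pos with rfl | hk0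
  · simp
  · simp [hk0.ne', Nat.not_dvd_of_pos_of_lt hk0 hk]

theorem coeff_prod_g {ι : Type*} [Fintype ι] (v : ι → ℕ) {m : ℕ} (hm : 0 < m)
    (h : ∀ i j, i ≠ j → m < v i + v j) :
    coeff m (∏ i, g (v i)) = 2 * #{i | v i ∣ m} := by
  have hdvd : X ^ (m + 1) ∣ ∏ i, g (v i) - (1 + ∑ i, (g (v i) - 1)) :=
    dvd_prod_sub_one_add_sum _ _ fun i _ j _ hij =>
      (pow_dvd_pow (X : PowerSeries ℚ) (h i j hij)).trans
        (pow_add (X : PowerSeries ℚ) (v i) (v j) ▸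
          mul_dvd_mul (X_pow_dvd_g_sub_one _) (X_pow_dvd_g_sub_one _))
  have hcoeff := X_pow_dvd_iff.1 hdvd m (lt_add_one m)
  rw [map_sub, sub_eq_zero] at hcoeff
  simp only [hcoeff, map_add, map_sum, map_sub, coeff_one, coeff_g, hm.ne', if_false, sub_zero,
    zero_add]
  simp [sum_ite, mul_comm]

theorem sum_sign_mul_card_dvd_eq_zero {P ι : Type*} [Fintype P] [Fintype ι]
    (ε : P → ℤ) (w : P → ι → ℕ) {C : ℚ}
    (hconst : ∑ p, (ε p : ℚ) • ∏ i, g (w p i) = PowerSeries.C C) {m : ℕ} (hm : 0 < m)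
    (h : ∀ p i j, i ≠ j → m < w p i + w p j) :
    ∑ p, (ε p : ℚ) * #{i | w p i ∣ m} = 0 := by
  have := congrArg (coeff m) hconst
  simp only [map_sum, LinearMap.map_smul, smul_eq_mul, coeff_prod_g _ hm (h _), coeff_C,
    hm.ne', if_false] at this
  simp_rw [mul_left_comm _ (2 : ℚ), ← mul_sum] at this
  exact (mul_eq_zero.1 this).resolve_left two_ne_zero

theorem sum_sign_mul_eq_sub {P : Type*} [Fintype P] {ε : P → ℤ}
    (hε : ∀ p, ε p = 1 ∨ ε p = -1) (c : P → ℚ) :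
    ∑ p, (ε p : ℚ) * c p =
      ∑ p ∈ univ.filter (fun p => ε p = 1), c p - ∑ p ∈ univ.filter (fun p => ε p = -1), c p := by
  have hneg : univ.filter (fun p => ¬ε p = 1) = univ.filter (fun p => ε p = -1) :=
    filter_congr fun p _ => by rcases hε p with h | h <;> simp [h]
  rw [← sum_filter_add_sum_filter_not univ (fun p => ε p = 1), hneg, sub_eq_add_neg,
    ← sum_neg_distrib]
  congr 1 <;> refine sum_congr rfl fun p hp => ?_ <;> simp [(mem_filter.1 hp).2]

theorem countP_dvd_eq_of_sum_smul_prod_g_eq_C {P ι : Type*} [Fintype P] [Fintype ι]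
    {ε : P → ℤ} (hε : ∀ p, ε p = 1 ∨ ε p = -1) {w : P → ι → ℕ} {C : ℚ}
    (hconst : ∑ p, (ε p : ℚ) • ∏ i, g (w p i) = PowerSeries.C C) {m : ℕ} (hm : 0 < m)
    (h : ∀ p i j, i ≠ j → m < w p i + w p j) :
    (∑ p ∈ univ.filter (fun p => ε p = 1), univ.val.map (w p)).countP (· ∣ m) =
      (∑ p ∈ univ.filter (fun p => ε p = -1), univ.val.map (w p)).countP (· ∣ m) := by
  have := sum_sign_mul_card_dvd_eq_zero ε w hconst hm h
  rw [sum_sign_mul_eq_sub hε, sub_eq_zero] at this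
  rw [countP_sum_map_univ, countP_sum_map_univ]
  exact_mod_cast this

theorem stmt_0_general (n : ℕ) (hn : 2 ≤ n) (P : Type*) [Fintype P]
    (ε : P → ℤ) (hε : ∀ p, ε p = 1 ∨ ε p = -1)
    (w : P → Fin n → ℕ) (hw : ∀ p i, 0 < w p i)
    (C : ℚ)
    (hconst : ∑ p : P, (ε p : ℚ) • ∏ i : Fin n, g (w p i) = PowerSeries.C C)
    (hpos : ∃ p, ε p = 1) (hneg : ∃ p, ε p = -1)
    (Wpos Wneg : Multiset ℕ)
    (hWpos : Wpos =
      ∑ p ∈ Finset.univ.filter (fun p => ε p = 1), Finset.univ.val.map (w p))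
    (hWneg : Wneg =
      ∑ p ∈ Finset.univ.filter (fun p => ε p = -1), Finset.univ.val.map (w p)) :
    (Wpos.sort (· ≤ ·)).getD 0 0 = (Wneg.sort (· ≤ ·)).getD 0 0 ∧
    (Wpos.sort (· ≤ ·)).getD 1 0 = (Wneg.sort (· ≤ ·)).getD 1 0 ∧
    Wpos.count ((Wpos.sort (· ≤ ·)).getD 1 0) =
      Wneg.count ((Wpos.sort (· ≤ ·)).getD 1 0) := by
  have hpair : ∀ p (i j : Fin n), i ≠ j →
      min ((Wpos.sort (· ≤ ·)).getD 1 0) ((Wneg.sort (· ≤ ·)).getD 1 0) < w p i + w p j := by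
    intro p i j hij
    rcases hε p with hp | hp
    · exact (min_le_left _ _).trans_lt <| sort_getD_one_lt_add
        (hWpos ▸ map_univ_le_sum_map_univ w _ (mem_filter.2 ⟨mem_univ p, hp⟩)) (hw p) hij
    · exact (min_le_right _ _).trans_lt <| sort_getD_one_lt_add
        (hWneg ▸ map_univ_le_sum_map_univ w _ (mem_filter.2 ⟨mem_univ p, hp⟩)) (hw p) hij
  have hcount := Multiset.count_eq_of_countP_dvd_eq
    (hWpos ▸ zero_notMem_sum_map_univ w _ hw) (hWneg ▸ zero_notMem_sum_map_univ w _ hw)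
    fun m hm hmt => hWpos ▸ hWneg ▸ countP_dvd_eq_of_sum_smul_prod_g_eq_C hε hconst hm
      fun p i j hij => hmt.trans_lt (hpair p i j hij)
  have hcard : ∀ σ : ℤ, (∃ p, ε p = σ) →
      1 < Multiset.card (∑ p ∈ univ.filter (fun p => ε p = σ), univ.val.map (w p)) := by
    rintro σ ⟨p, hp⟩
    have := card_le_card_sum_map_univ w (univ.filter fun q => ε q = σ)
      (mem_filter.2 ⟨mem_univ p, hp⟩)
    rw [Fintype.card_fin] at this
    omega
  have hsort := Multiset.sort_getD_eq_of_count_eq_of_le_min 0 (hWpos ▸ hcard 1 hpos)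
    (hWneg ▸ hcard (-1) hneg) hcount
  exact ⟨hsort 0 zero_le_one, hsort 1 le_rfl, hcount _ (le_min le_rfl (hsort 1 le_rfl).le)⟩

theorem stmt_0 (n : ℕ) (hn : 2 ≤ n) (P : Type*) [Fintype P] [Nonempty P]
    (ε : P → ℤ) (hε : ∀ p, ε p = 1 ∨ ε p = -1)
    (w : P → Fin n → ℕ) (hw : ∀ p i, 0 < w p i)
    (C : ℚ)
    (hconst : ∑ p : P, (ε p : ℚ) • ∏ i : Fin n, g (w p i) = PowerSeries.C C)
    (hpos : ∃ p, ε p = 1) (hneg : ∃ p, ε p = -1)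
    (Wpos Wneg : Multiset ℕ)
    (hWpos : Wpos =
      ∑ p ∈ Finset.univ.filter (fun p => ε p = 1), Finset.univ.val.map (w p))
    (hWneg : Wneg =
      ∑ p ∈ Finset.univ.filter (fun p => ε p = -1), Finset.univ.val.map (w p)) :
    (Wpos.sort (· ≤ ·)).getD 0 0 = (Wneg.sort (· ≤ ·)).getD 0 0 ∧
    (Wpos.sort (· ≤ ·)).getD 1 0 = (Wneg.sort (· ≤ ·)).getD 1 0 ∧
    Wpos.count ((Wpos.sort (· ≤ ·)).getD 1 0) =
      Wneg.count ((Wpos.sort (· ≤ ·)).getD 1 0) :=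
  stmt_0_general n hn P ε hε w hw C hconst hpos hneg Wpos Wneg hWpos hWneg
end

section
/- Let n ≥ 1 be an integer, let ε₁, ε₂ ∈ {−1, +1}, and let A and B be multisets of positive integers, each of cardinality n. If the power series ε₁ · ∏_{w ∈ A} g_w + ε₂ · ∏_{w ∈ B} g_w in ℚ⟦X⟧ is constant, then ε₂ = −ε₁, A = B as multisets, and the constant is 0. -/
open PowerSeries

theorem pow_succ_dvd_mul_sub_one_add_mul_pow {R : Type*} [CommRing R] {x p q a b : R} {m : ℕ}
    (hm : m ≠ 0) (hp : x ^ (m + 1) ∣ p - (1 + a * x ^ m))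
    (hq : x ^ (m + 1) ∣ q - (1 + b * x ^ m)) :
    x ^ (m + 1) ∣ p * q - (1 + (a + b) * x ^ m) := by
  have hsq : x ^ (m + 1) ∣ x ^ (m + m) := pow_dvd_pow x (by omega)
  have key : p * q - (1 + (a + b) * x ^ m) = (p - (1 + a * x ^ m)) * q
      + (1 + a * x ^ m) * (q - (1 + b * x ^ m)) + a * b * x ^ (m + m) := by ring
  rw [key]
  exact ((dvd_mul_of_dvd_left hp _).add (dvd_mul_of_dvd_right hq _)).add
    (dvd_mul_of_dvd_right hsq _)

theorem constantCoeff_g (w : ℕ) : constantCoeff (g w) = 1 := by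
  rw [← coeff_zero_eq_constantCoeff_apply, g, coeff_mk, if_pos rfl]

theorem constantCoeff_prod_map_g (A : Multiset ℕ) : constantCoeff (A.map g).prod = 1 := by
  simp [map_multiset_prod, constantCoeff_g]

theorem X_pow_succ_dvd_g_sub {m w : ℕ} (hm : m ≠ 0) (hw : m ≤ w) :
    X ^ (m + 1) ∣ g w - (1 + C (2 * ({w} : Multiset ℕ).count m : ℚ) * X ^ m) := by
  rw [X_pow_dvd_iff]
  intro k hk
  rw [map_sub, map_add, coeff_C_mul_X_pow, coeff_one, g, coeff_mk, Multiset.count_singleton]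
  rcases Nat.eq_zero_or_pos k with rfl | hk0
  · simp [Ne.symm hm]
  have hdvd : w ∣ k ↔ k = w :=
    ⟨fun h => by have := Nat.le_of_dvd hk0 h; omega, by rintro rfl; rfl⟩
  simp only [if_neg hk0.ne', hdvd, zero_add]
  split_ifs <;> first | omega | norm_num

theorem X_pow_succ_dvd_prod_map_g_sub {m : ℕ} (hm : m ≠ 0) {A : Multiset ℕ}
    (hA : ∀ w ∈ A, m ≤ w) :
    X ^ (m + 1) ∣ (A.map g).prod - (1 + C (2 * A.count m : ℚ) * X ^ m) := by
  induction A using Multiset.induction with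
  | empty => simp
  | cons w A ih =>
    have hw := X_pow_succ_dvd_g_sub hm (hA w (Multiset.mem_cons_self w A))
    have hA' := ih fun v hv => hA v (Multiset.mem_cons_of_mem hv)
    rw [Multiset.map_cons, Multiset.prod_cons, ← Multiset.singleton_add, Multiset.count_add]
    push_cast
    simpa [mul_add, add_comm] using pow_succ_dvd_mul_sub_one_add_mul_pow hm hw hA'

theorem coeff_prod_map_g_of_forall_le {m : ℕ} (hm : m ≠ 0) {A : Multiset ℕ}
    (hA : ∀ w ∈ A, m ≤ w) : coeff m (A.map g).prod = 2 * A.count m := by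
  have := (X_pow_dvd_iff.mp (X_pow_succ_dvd_prod_map_g_sub hm hA)) m (by omega)
  rwa [map_sub, map_add, coeff_C_mul_X_pow, coeff_one, if_neg hm, if_pos rfl, zero_add,
    sub_eq_zero] at this

theorem g_ne_zero (w : ℕ) : g w ≠ 0 := fun h => by simpa [h] using constantCoeff_g w

theorem exists_coeff_prod_map_g_eq_two_mul_count {A B : Multiset ℕ} (hA : ∀ w ∈ A, 0 < w)
    (hB : ∀ w ∈ B, 0 < w) (hAB : A + B ≠ 0) :
    ∃ m ≠ 0, 0 < A.count m + B.count m ∧ coeff m (A.map g).prod = 2 * A.count m ∧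
      coeff m (B.map g).prod = 2 * B.count m := by
  obtain ⟨m, hmem, hmin⟩ := (A + B).toFinset.exists_min_image id
    (Multiset.toFinset_nonempty.mpr hAB)
  simp only [Multiset.mem_toFinset, Multiset.mem_add, id] at hmem hmin
  have hm : m ≠ 0 := (hmem.elim (hA m) (hB m)).ne'
  have hpos : 0 < A.count m + B.count m := by
    rw [← Multiset.count_add]
    exact Multiset.count_pos.mpr (Multiset.mem_add.mpr hmem)
  exact ⟨m, hm, hpos, coeff_prod_map_g_of_forall_le hm fun w hw => hmin w (.inl hw),
    coeff_prod_map_g_of_forall_le hm fun w hw => hmin w (.inr hw)⟩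

theorem eq_of_prod_map_g_eq {A B : Multiset ℕ} (hA : ∀ w ∈ A, 0 < w) (hB : ∀ w ∈ B, 0 < w)
    (h : (A.map g).prod = (B.map g).prod) : A = B := by
  induction A using Multiset.strongInductionOn generalizing B with
  | ih A ih =>
  rcases eq_or_ne (A + B) 0 with hAB | hAB
  · obtain ⟨rfl, rfl⟩ := add_eq_zero.mp hAB
    rfl
  obtain ⟨m, -, hpos, hcA, hcB⟩ := exists_coeff_prod_map_g_eq_two_mul_count hA hB hAB
  have hcount : A.count m = B.count m := by
    have := congrArg (coeff m) h
    rw [hcA, hcB] at this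
    exact_mod_cast mul_left_cancel₀ two_ne_zero this
  have hmA : m ∈ A := Multiset.count_pos.mp (by omega)
  have hmB : m ∈ B := Multiset.count_pos.mp (by omega)
  rw [← Multiset.cons_erase hmA, ← Multiset.cons_erase hmB] at h ⊢
  simp only [Multiset.map_cons, Multiset.prod_cons] at h
  rw [ih _ (Multiset.erase_lt.mpr hmA) (fun w hw => hA w (Multiset.mem_of_mem_erase hw))
    (fun w hw => hB w (Multiset.mem_of_mem_erase hw)) (mul_left_cancel₀ (g_ne_zero m) h)]

theorem stmt_2_general (n : ℕ) (hn : 1 ≤ n) (ε₁ ε₂ : ℤ)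
    (hε₁ : ε₁ = 1 ∨ ε₁ = -1) (hε₂ : ε₂ = 1 ∨ ε₂ = -1)
    (A B : Multiset ℕ) (hA : ∀ x ∈ A, 0 < x) (hB : ∀ x ∈ B, 0 < x)
    (hAcard : Multiset.card A = n)
    (C : ℚ)
    (h : (ε₁ : ℚ) • (A.map g).prod + (ε₂ : ℚ) • (B.map g).prod = PowerSeries.C C) :
    ε₂ = -ε₁ ∧ A = B ∧ C = 0 := by
  have hA0 : A ≠ 0 := Multiset.card_pos.mp (by omega)
  have hAB : A + B ≠ 0 := fun h0 => hA0 (add_eq_zero.mp h0).1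
  have hsign : ε₂ = -ε₁ := by
    obtain ⟨m, hm, hpos, hcA, hcB⟩ := exists_coeff_prod_map_g_eq_two_mul_count hA hB hAB
    have hcoeff := congrArg (coeff m) h
    rw [map_add, coeff_smul, coeff_smul, hcA, hcB, coeff_C, if_neg hm] at hcoeff
    have hpos' : (0 : ℚ) < A.count m + B.count m := by exact_mod_cast hpos
    rcases hε₁ with rfl | rfl <;> rcases hε₂ with rfl | rfl <;> norm_num at hcoeff ⊢ <;>
      linarith
  have hC : C = 0 := by
    simpa [hsign, constantCoeff_prod_map_g] using (congrArg constantCoeff h).symm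
  have hε₁0 : (ε₁ : ℚ) ≠ 0 := by rcases hε₁ with rfl | rfl <;> norm_num
  rw [hsign, hC, map_zero, Int.cast_neg, neg_smul, ← sub_eq_add_neg, ← smul_sub,
    smul_eq_zero_iff_right hε₁0, sub_eq_zero] at h
  exact ⟨hsign, eq_of_prod_map_g_eq hA hB h, hC⟩

theorem stmt_2 (n : ℕ) (hn : 1 ≤ n) (ε₁ ε₂ : ℤ)
    (hε₁ : ε₁ = 1 ∨ ε₁ = -1) (hε₂ : ε₂ = 1 ∨ ε₂ = -1)
    (A B : Multiset ℕ) (hA : ∀ x ∈ A, 0 < x) (hB : ∀ x ∈ B, 0 < x)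
    (hAcard : Multiset.card A = n) (hBcard : Multiset.card B = n)
    (C : ℚ)
    (h : (ε₁ : ℚ) • (A.map g).prod + (ε₂ : ℚ) • (B.map g).prod = PowerSeries.C C) :
    ε₂ = -ε₁ ∧ A = B ∧ C = 0 :=
  stmt_2_general n hn ε₁ ε₂ hε₁ hε₂ A B hA hB hAcard C h
end

section
/- Let a, b, c, e be positive real numbers with a < b and c < b. If 1/(a·b·c) + 1/(a·(b−a)·e) − 1/(b·(b−a)·(b−c)) − 1/(c·e·(b−c)) = 0, then b = a + c or e = a − c. -/
theorem one_div_sum_localization_eq {K : Type*} [Field K] {a b c e : K} (ha : a ≠ 0) (hb : b ≠ 0)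
    (hc : c ≠ 0) (he : e ≠ 0) (hba : b - a ≠ 0) (hbc : b - c ≠ 0) :
    1 / (a * b * c) + 1 / (a * (b - a) * e) - 1 / (b * (b - a) * (b - c)) - 1 / (c * e * (b - c)) =
      b * (b - a - c) * (e - (a - c)) / (a * b * c * e * (b - a) * (b - c)) := by
  field_simp
  ring

theorem stmt_7 (a b c e : ℝ) (ha : 0 < a) (hb : 0 < b) (hc : 0 < c) (he : 0 < e)
    (hab : a < b) (hcb : c < b)
    (h : 1 / (a * b * c) + 1 / (a * (b - a) * e) - 1 / (b * (b - a) * (b - c))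
      - 1 / (c * e * (b - c)) = 0) :
    b = a + c ∨ e = a - c := by
  have hba : b - a ≠ 0 := sub_ne_zero.2 hab.ne'
  have hbc : b - c ≠ 0 := sub_ne_zero.2 hcb.ne'
  have hden : a * b * c * e * (b - a) * (b - c) ≠ 0 := by positivity
  rw [one_div_sum_localization_eq ha.ne' hb.ne' hc.ne' he.ne' hba hbc, div_eq_zero_iff,
    or_iff_left hden, mul_eq_zero, mul_eq_zero, or_iff_right hb.ne'] at h
  rcases h with hsum | hdiff
  · exact .inl (by linear_combination hsum)
  · exact .inr (sub_eq_zero.1 hdiff)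
end

section
/- There do not exist positive integers a and d with a < d < 2a such that 1/(a·(2a−d)·(d−a)) + 1/(a·d·(2a−d)) = 1/((2d−a)·d·(2d−2a)) + 1/((d−a)·(2a−d)·(2d−2a)). -/
/-!
Clearing denominators turns the identity into `d * (8 d² - 17 a d + 8 a²) = 0`. The quadratic
form `8 d² - 17 a d + 8 a²` has discriminant `17² - 4 · 8 · 8 = 33`, which is not a square, so it
has no rational zero with `a ≠ 0`: `32 (8 d² - 17 a d + 8 a²) = (16 d - 17 a)² - 33 a²`.
-/

theorem quadratic_of_localization_identity {K : Type*} [Field K] [LinearOrder K]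
    [IsStrictOrderedRing K] {a d : K} (ha : 0 < a) (had : a < d) (hd : d < 2 * a)
    (h : 1 / (a * (2 * a - d) * (d - a)) + 1 / (a * d * (2 * a - d)) =
      1 / ((2 * d - a) * d * (2 * d - 2 * a)) + 1 / ((d - a) * (2 * a - d) * (2 * d - 2 * a))) :
    8 * d ^ 2 - 17 * a * d + 8 * a ^ 2 = 0 := by
  have hd0 : 0 < d := ha.trans had
  have hda : 0 < d - a := sub_pos.2 had
  have h2ad : 0 < 2 * a - d := sub_pos.2 hd
  have h2da : 0 < 2 * d - a := by linarith
  have h2d2a : 0 < 2 * d - 2 * a := by linarith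
  rw [div_add_div _ _ (by positivity) (by positivity),
    div_add_div _ _ (by positivity) (by positivity),
    div_eq_div_iff (by positivity) (by positivity)] at h
  have hc : a * d ^ 2 * (2 * a - d) ^ 2 * (d - a) * (2 * d - 2 * a) ≠ 0 := by positivity
  refine (mul_eq_zero.1 ?_).resolve_left hc
  linear_combination h

theorem Nat.not_isSquare_thirtyThree : ¬ IsSquare 33 := by
  rintro ⟨r, hr⟩
  have : r ≤ 5 := by nlinarith
  interval_cases r <;> omega

theorem eight_sq_sub_seventeen_mul_add_eight_sq_ne_zero {a d : ℚ} (ha : a ≠ 0) :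
    8 * d ^ 2 - 17 * a * d + 8 * a ^ 2 ≠ 0 := by
  intro h
  have h33 : IsSquare ((33 : ℕ) : ℚ) := ⟨(16 * d - 17 * a) / a, by
    field_simp
    linear_combination -32 * h⟩
  exact Nat.not_isSquare_thirtyThree (Rat.isSquare_natCast_iff.1 h33)

theorem stmt_9 :
    ¬ ∃ a d : ℕ, 0 < a ∧ a < d ∧ d < 2 * a ∧
      1 / ((a : ℚ) * (2 * a - d) * (d - a)) + 1 / ((a : ℚ) * d * (2 * a - d)) =
        1 / ((2 * (d : ℚ) - a) * d * (2 * d - 2 * a)) +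
          1 / (((d : ℚ) - a) * (2 * a - d) * (2 * d - 2 * a)) := by
  rintro ⟨a, d, ha, had, hd, h⟩
  have ha' : (0 : ℚ) < a := by exact_mod_cast ha
  exact eight_sq_sub_seventeen_mul_add_eight_sq_ne_zero ha'.ne'
    (quadratic_of_localization_identity ha' (by exact_mod_cast had) (by exact_mod_cast hd) h)
end

section
/- Let b, c, e, f be positive integers. If g_{c+e}·g_b·(g_c + g_e) = g_f·(g_b·g_b + g_c·g_e) in ℚ⟦X⟧, then f = c + e and moreover b = c or b = e. -/
open PowerSeries

theorem g_eq_expand {w : ℕ} (hw : w ≠ 0) : g w = expand w hw (g 1) := by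
  ext n
  by_cases hn : n = 0
  · simp [g, coeff_expand, hn]
  · have hle : w ∣ n → w ≤ n := Nat.le_of_dvd (Nat.pos_of_ne_zero hn)
    simp only [g, coeff_mk, coeff_expand, hn, Nat.div_eq_zero_iff, hw, one_dvd]
    split_ifs <;> grind

theorem g_one_mul_one_sub_X : g 1 * (1 - X) = 1 + X := by
  have hg : g 1 = C 2 * mk 1 - 1 := by
    ext n
    rcases n with _ | n <;> norm_num [g]
  rw [hg, sub_mul, mul_assoc, mk_one_mul_one_sub_eq_one, mul_one, map_ofNat]
  ring

theorem g_mul_one_sub_X_pow {w : ℕ} (hw : w ≠ 0) : g w * (1 - X ^ w) = 1 + X ^ w := by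
  simpa [← g_eq_expand, expand_X] using congrArg (expand w hw) g_one_mul_one_sub_X

theorem coeff_sum_map_X_pow {R : Type*} [Semiring R] (s : Multiset ℕ) (n : ℕ) :
    coeff n (s.map ((X : R⟦X⟧) ^ ·)).sum = s.count n := by
  induction s using Multiset.induction_on with
  | empty => simp
  | cons a s ih => simp [ih, coeff_X_pow, Multiset.count_cons, add_comm]

theorem eq_of_sum_map_X_pow_eq {R : Type*} [Semiring R] [CharZero R] {s t : Multiset ℕ}
    (h : (s.map ((X : R⟦X⟧) ^ ·)).sum = (t.map (X ^ ·)).sum) : s = t := by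
  ext n
  exact_mod_cast (coeff_sum_map_X_pow s n).symm.trans
    ((congrArg (coeff n) h).trans (coeff_sum_map_X_pow t n))

theorem sum_X_pow_eq_of_g_identity {b c e f : ℕ} (hb : b ≠ 0) (hc : c ≠ 0) (he : e ≠ 0)
    (hf : f ≠ 0) (h : g (c + e) * g b * (g c + g e) = g f * (g b * g b + g c * g e)) :
    (X : ℚ⟦X⟧) ^ (b + c) + X ^ (b + e) + X ^ (b + c + f) + X ^ (b + e + f) =
      X ^ (b + b) + X ^ f + X ^ (b + b + (c + e)) + X ^ (f + (c + e)) := by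
  have hcleared : g (c + e) * (1 - X ^ (c + e)) * (g b * (1 - X ^ b)) *
        (g c * (1 - X ^ c) * (1 - X ^ e) + g e * (1 - X ^ e) * (1 - X ^ c)) *
        ((1 - X ^ b) * (1 - X ^ f)) =
      g f * (1 - X ^ f) * ((g b * (1 - X ^ b)) ^ 2 * ((1 - X ^ c) * (1 - X ^ e)) +
        g c * (1 - X ^ c) * (g e * (1 - X ^ e)) * (1 - X ^ b) ^ 2) * (1 - X ^ (c + e)) := by
    linear_combination
      ((1 - X ^ (c + e)) * (1 - X ^ b) ^ 2 * (1 - X ^ c) * (1 - X ^ e) * (1 - X ^ f)) * h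
  rw [g_mul_one_sub_X_pow (by omega), g_mul_one_sub_X_pow hb, g_mul_one_sub_X_pow hc,
    g_mul_one_sub_X_pow he, g_mul_one_sub_X_pow hf] at hcleared
  have hunit : (4 * (1 - X ^ (c + e)) : ℚ⟦X⟧) ≠ 0 := fun h0 => by
    simpa [hc, he, map_ofNat constantCoeff] using congrArg constantCoeff h0
  refine mul_left_cancel₀ hunit ?_
  linear_combination hcleared

theorem stmt_10 (b c e f : ℕ) (hb : 0 < b) (hc : 0 < c) (he : 0 < e) (hf : 0 < f)
    (h : g (c + e) * g b * (g c + g e) = g f * (g b * g b + g c * g e)) :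
    f = c + e ∧ (b = c ∨ b = e) := by
  have hexp : ({b + c, b + e, b + c + f, b + e + f} : Multiset ℕ) =
      {b + b, f, b + b + (c + e), f + (c + e)} := by
    apply eq_of_sum_map_X_pow_eq (R := ℚ)
    simpa [add_assoc] using sum_X_pow_eq_of_g_identity hb.ne' hc.ne' he.ne' hf.ne' h
  have hL := Multiset.subset_of_le hexp.le
  have hR := Multiset.subset_of_le hexp.ge
  simp only [Multiset.insert_eq_cons, Multiset.cons_subset, Multiset.singleton_subset,
    Multiset.mem_cons, Multiset.mem_singleton] at hL hR
  omega
end
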